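/- arXiv:1710.02956 — 2 statements merged into one kernel-verified Lean document; each statement's English description precedes it below -/
import Mathlib

section
/- For all n ∈ ℕ and every set S of positive integers, (A_{n,S} : ℚ)/n! = ∑_{π} 1/(|π|! · ∏_i π_i), where the sum ranges over all compositions π of n all of whose parts lie in S. -/
/-!
Both sides of the identity, viewed as functions `a` of `n`, satisfy `a 0 = 1` and the recurrence
`n * a n = ∑ s ∈ S, 1 ≤ s ≤ n, a (n - s)`, which determines `a`.

For permutations, count the pairs `(σ, x)` by the length `s` of the cycle of `σ` through `x`.
Reading that cycle off from `x` gives an embedding `ZMod s ↪ Fin n` conjugating `(· + 1)` to `σ`,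
and `σ` is this cycle together with an arbitrary permutation of the complement whose cycle lengths
lie in `S`; hence `n * A n = ∑ n.descFactorial s * A (n - s)`.

For compositions with weight `w π = 1 / (|π|! * ∏ πᵢ)`, write `n * w π = ∑ⱼ πⱼ * w π`.
Removing the part `πⱼ` is a bijection from compositions of `n` with a marked part onto triples
`(s, π', j)` with `π'` a composition of `n - s` and `j ≤ |π'|` a slot, and
`πⱼ * w π = w π' / (|π'| + 1)`; summing over the `|π'| + 1` slots leaves `w π'`.
-/

/-- Generalized factorial number `A_{n,S}`: the number of permutations of `{1,…,n}`
all of whose cycle lengths lie in `S` (fixed points counting as cycles of length 1). -/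
noncomputable def genA (S : Set ℕ) (n : ℕ) : ℕ :=
  Nat.card {σ : Equiv.Perm (Fin n) // ∀ x, Function.minimalPeriod σ x ∈ S}

open Function Equiv Finset

theorem Function.Semiconj.minimalPeriod_eq {α β : Type*} {f : α → β} {fa : α → α} {fb : β → β}
    (h : Semiconj f fa fb) (hf : Injective f) (x : α) :
    minimalPeriod fb (f x) = minimalPeriod fa x :=
  minimalPeriod_eq_minimalPeriod_iff.mpr fun n => by
    simp only [IsPeriodicPt, IsFixedPt, ← h.iterate_right n x, hf.eq_iff]

theorem ZMod.minimalPeriod_add_one (s : ℕ) (i : ZMod s) : minimalPeriod (· + 1) i = s := by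
  have h : Semiconj (· + i) (· + 1) (· + (1 : ZMod s)) := fun a => add_right_comm a 1 i
  have h0 : minimalPeriod (· + 1) (0 : ZMod s) = addOrderOf (1 : ZMod s) := by
    simp only [addOrderOf, add_comm _ (1 : ZMod s)]
  rw [← zero_add i, h.minimalPeriod_eq (add_left_injective i), h0, ZMod.addOrderOf_one]

theorem Equiv.Perm.minimalPeriod_subtypePerm {α : Type*} {p : α → Prop} (σ : Perm α)
    (h : ∀ x, p (σ x) ↔ p x) (x : {x // p x}) :
    minimalPeriod (σ.subtypePerm h) x = minimalPeriod σ x :=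
  (Semiconj.minimalPeriod_eq (f := Subtype.val) (fa := σ.subtypePerm h) (fb := σ) (fun _ => rfl)
    Subtype.val_injective x).symm

theorem card_perm_minimalPeriod_mem_eq_genA (S : Set ℕ) (β : Type*) [Finite β] :
    Nat.card {σ : Perm β // ∀ x, minimalPeriod σ x ∈ S} = genA S (Nat.card β) := by
  let e := Finite.equivFin β
  refine Nat.card_congr (subtypeEquiv (permCongr e) fun σ => e.forall_congr fun x => ?_)
  have he : Semiconj e σ (permCongr e σ) := fun y => by simp [permCongr_apply]
  rw [he.minimalPeriod_eq e.injective]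

section Orbit

variable {α : Type*} {s : ℕ} {f : α → α}

theorem ZMod.semiconj_add_one_apply_natCast {w : ZMod s → α} (hw : Semiconj w (· + 1) f)
    (k : ℕ) : w k = f^[k] (w 0) := by
  induction k with
  | zero => simp
  | succ k ih => rw [Nat.cast_succ, hw, ih, iterate_succ_apply']

theorem ZMod.eq_of_semiconj_add_one [NeZero s] {w w' : ZMod s → α}
    (hw : Semiconj w (· + 1) f) (hw' : Semiconj w' (· + 1) f) (h0 : w 0 = w' 0) : w = w' := by
  funext i
  rw [← ZMod.natCast_zmod_val i, semiconj_add_one_apply_natCast hw,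
    semiconj_add_one_apply_natCast hw', h0]

theorem minimalPeriod_eq_of_semiconj {w : ZMod s ↪ α} (hw : Semiconj w (· + 1) f) (i : ZMod s) :
    minimalPeriod f (w i) = s := by
  rw [hw.minimalPeriod_eq w.injective, ZMod.minimalPeriod_add_one]

theorem apply_mem_range_iff_of_semiconj {w : ZMod s → α} {σ : Perm α}
    (hσ : Semiconj w (· + 1) σ) (y : α) : σ y ∈ Set.range w ↔ y ∈ Set.range w := by
  constructor
  · rintro ⟨i, hi⟩
    refine ⟨i - 1, σ.injective ?_⟩
    rw [← hσ]
    beta_reduce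
    rw [sub_add_cancel, hi]
  · rintro ⟨i, rfl⟩
    exact ⟨i + 1, hσ i⟩

variable [NeZero s] {x : α}

def orbitEmbedding (f : α → α) (x : α) (h : minimalPeriod f x = s) : ZMod s ↪ α where
  toFun i := f^[i.val] x
  inj' i j hij := ZMod.val_injective s <| iterate_injOn_Iio_minimalPeriod
    (by simpa [h] using i.val_lt) (by simpa [h] using j.val_lt) hij

theorem orbitEmbedding_natCast (h : minimalPeriod f x = s) (k : ℕ) :
    orbitEmbedding f x h k = f^[k] x := by
  show f^[(k : ZMod s).val] x = f^[k] x
  rw [ZMod.val_natCast, ← h, iterate_mod_minimalPeriod_eq]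

theorem orbitEmbedding_zero (h : minimalPeriod f x = s) : orbitEmbedding f x h 0 = x := by
  simpa using orbitEmbedding_natCast h 0

theorem semiconj_orbitEmbedding (h : minimalPeriod f x = s) :
    Semiconj (orbitEmbedding f x h) (· + 1) f := fun i => by
  beta_reduce
  rw [← ZMod.natCast_zmod_val i, ← Nat.cast_succ, orbitEmbedding_natCast,
    orbitEmbedding_natCast, iterate_succ_apply']

theorem orbitEmbedding_eq_of_semiconj {w : ZMod s ↪ α} (hw : Semiconj w (· + 1) f)
    (h : minimalPeriod f (w 0) = s) : orbitEmbedding f (w 0) h = w :=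
  DFunLike.coe_injective <| ZMod.eq_of_semiconj_add_one (semiconj_orbitEmbedding h) hw
    (orbitEmbedding_zero h)

end Orbit

section CycleExtension

variable {α : Type*} [DecidableEq α] {s : ℕ} [NeZero s]

noncomputable def extendByCycle (w : ZMod s ↪ α) (τ : Perm {y // y ∉ Set.range w}) : Perm α :=
  ((Equiv.ofInjective w w.injective).permCongr (Equiv.addRight 1)).subtypeCongr τ

variable {w : ZMod s ↪ α}

theorem semiconj_extendByCycle (τ : Perm {y // y ∉ Set.range w}) :
    Semiconj w (· + 1) (extendByCycle w τ) := fun i => by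
  rw [extendByCycle, Perm.subtypeCongr.left_apply _ _ (Set.mem_range_self i)]
  simp [permCongr_apply]

theorem extendByCycle_apply_of_notMem (τ : Perm {y // y ∉ Set.range w})
    (y : {y // y ∉ Set.range w}) : extendByCycle w τ y = τ y :=
  Perm.subtypeCongr.right_apply_subtype _ _ y

theorem extendByCycle_subtypePerm {σ : Perm α} (hσ : Semiconj w (· + 1) σ) :
    extendByCycle w (σ.subtypePerm fun y => not_congr (apply_mem_range_iff_of_semiconj hσ y)) =
      σ := by
  ext y
  by_cases hy : y ∈ Set.range w
  · obtain ⟨i, rfl⟩ := hy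
    exact (semiconj_extendByCycle _ i).symm.trans (hσ i)
  · exact extendByCycle_apply_of_notMem _ ⟨y, hy⟩

theorem minimalPeriod_extendByCycle_of_notMem (τ : Perm {y // y ∉ Set.range w})
    (y : {y // y ∉ Set.range w}) :
    minimalPeriod (extendByCycle w τ) y = minimalPeriod τ y :=
  Semiconj.minimalPeriod_eq (fun y => (extendByCycle_apply_of_notMem τ y).symm)
    Subtype.val_injective y

end CycleExtension

section CycleCount

variable {α : Type*} {s : ℕ} [NeZero s]

def minimalPeriodFiberEquiv (P : Perm α → Prop) :
    {q : {σ : Perm α // P σ} × α // minimalPeriod q.1.1 q.2 = s} ≃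
      Σ w : ZMod s ↪ α, {σ : {σ : Perm α // P σ} // Semiconj w (· + 1) σ.1} where
  toFun q := ⟨orbitEmbedding q.1.1.1 q.1.2 q.2, q.1.1, semiconj_orbitEmbedding q.2⟩
  invFun p := ⟨(p.2.1, p.1 0), minimalPeriod_eq_of_semiconj p.2.2 0⟩
  left_inv q := Subtype.ext (Prod.ext rfl (orbitEmbedding_zero q.2))
  right_inv := by
    rintro ⟨w, σ, hσ⟩
    exact Sigma.subtype_ext (orbitEmbedding_eq_of_semiconj hσ (minimalPeriod_eq_of_semiconj hσ 0))
      rfl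

variable [DecidableEq α] {S : Set ℕ}

noncomputable def semiconjPermEquiv (hs : s ∈ S) (w : ZMod s ↪ α) :
    {σ : {σ : Perm α // ∀ x, minimalPeriod σ x ∈ S} // Semiconj w (· + 1) σ.1} ≃
      {τ : Perm {y // y ∉ Set.range w} // ∀ y, minimalPeriod τ y ∈ S} where
  toFun σ := ⟨σ.1.1.subtypePerm fun y => not_congr (apply_mem_range_iff_of_semiconj σ.2 y),
    fun y => (Perm.minimalPeriod_subtypePerm _ _ y).symm ▸ σ.1.2 y⟩
  invFun τ := ⟨⟨extendByCycle w τ.1, fun x => by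
    by_cases hx : x ∈ Set.range w
    · obtain ⟨i, rfl⟩ := hx
      rwa [minimalPeriod_eq_of_semiconj (semiconj_extendByCycle τ.1)]
    · rw [minimalPeriod_extendByCycle_of_notMem τ.1 ⟨x, hx⟩]
      exact τ.2 _⟩, semiconj_extendByCycle τ.1⟩
  left_inv σ := Subtype.ext (Subtype.ext (extendByCycle_subtypePerm σ.2))
  right_inv τ := Subtype.ext (Equiv.ext fun y => Subtype.ext (extendByCycle_apply_of_notMem τ.1 y))

theorem card_minimalPeriod_eq_descFactorial_mul [Fintype α] (hs : s ∈ S) :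
    Nat.card {q : {σ : Perm α // ∀ x, minimalPeriod σ x ∈ S} × α // minimalPeriod q.1.1 q.2 = s}
      = (Fintype.card α).descFactorial s * genA S (Fintype.card α - s) := by
  have hcompl (w : ZMod s ↪ α) : Nat.card {y // y ∉ Set.range w} = Fintype.card α - s := by
    rw [Nat.card_eq_fintype_card, Fintype.card_subtype_compl,
      Set.card_range_of_injective w.injective, ZMod.card]
  rw [Nat.card_congr
      ((minimalPeriodFiberEquiv _).trans (sigmaCongrRight (semiconjPermEquiv hs))),
    Nat.card_sigma]
  simp only [card_perm_minimalPeriod_mem_eq_genA, hcompl, sum_const, card_univ, smul_eq_mul,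
    Fintype.card_embedding_eq, ZMod.card]

end CycleCount

theorem genA_zero (S : Set ℕ) : genA S 0 = 1 :=
  Nat.card_eq_one_iff_exists.mpr
    ⟨⟨1, fun x => x.elim0⟩, fun _ => Subtype.ext (Subsingleton.elim _ _)⟩

section GenA

variable {S : Set ℕ} [DecidablePred (· ∈ S)]

theorem genA_mul_eq_sum (hS : 0 ∉ S) (n : ℕ) :
    genA S n * n = ∑ s ∈ (Icc 1 n).filter (· ∈ S), n.descFactorial s * genA S (n - s) := by
  let A := {σ : Perm (Fin n) // ∀ x, minimalPeriod σ x ∈ S}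
  have hmaps : ((univ : Finset (A × Fin n)) : Set (A × Fin n)).MapsTo
      (fun q => minimalPeriod q.1.1 q.2) ((Icc 1 n).filter (· ∈ S)) := fun q _ => by
    have hq := q.1.2 q.2
    have hle : minimalPeriod q.1.1 q.2 ≤ n := by
      simpa using minimalPeriod_le_card (f := q.1.1) (x := q.2)
    exact mem_coe.mpr (mem_filter.mpr
      ⟨mem_Icc.mpr ⟨Nat.one_le_iff_ne_zero.mpr (ne_of_mem_of_not_mem hq hS), hle⟩, hq⟩)
  calc genA S n * n = Fintype.card (A × Fin n) := by
        rw [Fintype.card_prod, Fintype.card_fin, genA, Nat.card_eq_fintype_card]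
    _ = ∑ s ∈ (Icc 1 n).filter (· ∈ S),
          Nat.card {q : A × Fin n // minimalPeriod q.1.1 q.2 = s} := by
        rw [← card_univ, card_eq_sum_card_fiberwise hmaps]
        simp only [Nat.card_eq_fintype_card, Fintype.card_subtype]
    _ = _ := sum_congr rfl fun s hs => by
        obtain ⟨hs1, hsS⟩ := mem_filter.mp hs
        have : NeZero s := ⟨by simp only [mem_Icc] at hs1; omega⟩
        rw [card_minimalPeriod_eq_descFactorial_mul hsS, Fintype.card_fin]

theorem natCast_mul_genA_div_factorial (hS : 0 ∉ S) (n : ℕ) :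
    (n : ℚ) * (genA S n / n.factorial) =
      ∑ s ∈ (Icc 1 n).filter (· ∈ S), (genA S (n - s) : ℚ) / (n - s).factorial := by
  rw [mul_div_assoc', mul_comm, ← Nat.cast_mul, genA_mul_eq_sum hS, Nat.cast_sum, sum_div]
  refine sum_congr rfl fun s hs => ?_
  have hsn : s ≤ n := (mem_Icc.mp (mem_filter.mp hs).1).2
  rw [← Nat.factorial_mul_descFactorial hsn]
  push_cast
  have : ((n - s).factorial : ℚ) ≠ 0 := by positivity
  have : (n.descFactorial s : ℚ) ≠ 0 := by exact_mod_cast (Nat.descFactorial_pos.mpr hsn).ne'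
  field_simp

end GenA

def compositionWeight (l : List ℕ) : ℚ := 1 / ((l.length.factorial : ℚ) * (l.prod : ℚ))

theorem List.sum_eq_sum_range_getD {M : Type*} [AddCommMonoid M] (l : List M) :
    l.sum = ∑ j ∈ Finset.range l.length, l.getD j 0 := by
  rw [← Fin.sum_univ_getElem, ← Fin.sum_univ_eq_sum_range]
  exact sum_congr rfl fun j _ => (List.getD_eq_getElem _ _ j.2).symm

theorem compositionWeight_insertIdx (m : List ℕ) {j s : ℕ} (hj : j ≤ m.length) (hs : s ≠ 0) :
    s * compositionWeight (m.insertIdx j s) = compositionWeight m / (m.length + 1) := by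
  rw [compositionWeight, compositionWeight, List.length_insertIdx_of_le_length hj,
    List.CommMonoid.prod_insertIdx hj, Nat.factorial_succ]
  push_cast
  have : (s : ℚ) ≠ 0 := by exact_mod_cast hs
  field_simp

section Compositions

variable (S : Set ℕ) [DecidablePred (· ∈ S)]

-- Compositions are handled through their lists of parts, so that inserting or erasing a part
-- does not change the type.
def compositionBlocks (n : ℕ) : Finset (List ℕ) :=
  (univ.filter fun π : Composition n => ∀ i ∈ π.blocks, i ∈ S).image Composition.blocks

theorem sum_compositions_eq_sum_compositionBlocks (n : ℕ) :
    ∑ π ∈ univ.filter (fun π : Composition n => ∀ i ∈ π.blocks, i ∈ S),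
        1 / ((π.length.factorial : ℚ) * (π.blocks.prod : ℚ)) =
      ∑ l ∈ compositionBlocks S n, compositionWeight l := by
  rw [compositionBlocks, sum_image fun π _ π' _ h => Composition.ext h]
  rfl

variable {S}

theorem mem_compositionBlocks (hS : 0 ∉ S) {n : ℕ} {l : List ℕ} :
    l ∈ compositionBlocks S n ↔ (∀ i ∈ l, i ∈ S) ∧ l.sum = n := by
  constructor
  · simp only [compositionBlocks, mem_image, mem_filter, mem_univ, true_and]
    rintro ⟨π, hπ, rfl⟩
    exact ⟨hπ, π.blocks_sum⟩
  · rintro ⟨hl, rfl⟩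
    refine mem_image.mpr
      ⟨⟨l, fun hi => Nat.pos_of_ne_zero (ne_of_mem_of_not_mem (hl _ hi) hS), rfl⟩, ?_, rfl⟩
    simpa using hl

theorem compositionBlocks_zero (hS : 0 ∉ S) : compositionBlocks S 0 = {[]} := by
  ext l
  rw [mem_compositionBlocks hS, mem_singleton]
  constructor
  · rintro ⟨hl, hsum⟩
    exact List.eq_nil_iff_forall_not_mem.mpr fun i hi =>
      ne_of_mem_of_not_mem (hl i hi) hS (List.sum_eq_zero_iff.mp hsum i hi)
  · rintro rfl
    simp

theorem insertIdx_mem_compositionBlocks (hS : 0 ∉ S) {n s j : ℕ} {m : List ℕ}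
    (hm : m ∈ compositionBlocks S (n - s)) (hsS : s ∈ S) (hsn : s ≤ n) (hj : j ≤ m.length) :
    m.insertIdx j s ∈ compositionBlocks S n := by
  obtain ⟨hmS, hmsum⟩ := (mem_compositionBlocks hS).mp hm
  refine (mem_compositionBlocks hS).mpr ⟨fun i hi => ?_, ?_⟩
  · rcases List.eq_or_mem_of_mem_insertIdx hi with rfl | hi
    exacts [hsS, hmS i hi]
  · rw [List.CommMonoid.sum_insertIdx hj, hmsum]
    omega

theorem eraseIdx_mem_compositionBlocks (hS : 0 ∉ S) {n j : ℕ} {l : List ℕ}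
    (hl : l ∈ compositionBlocks S n) (hj : j < l.length) :
    l[j] ∈ (Icc 1 n).filter (· ∈ S) ∧ l.eraseIdx j ∈ compositionBlocks S (n - l[j]) := by
  obtain ⟨hlS, hlsum⟩ := (mem_compositionBlocks hS).mp hl
  have hsum := List.CommMonoid.add_sum_eraseIdx hj
  have hmem : l[j] ∈ S := hlS _ (List.getElem_mem hj)
  refine ⟨mem_filter.mpr ⟨mem_Icc.mpr
      ⟨Nat.one_le_iff_ne_zero.mpr (ne_of_mem_of_not_mem hmem hS), by omega⟩, hmem⟩,
    (mem_compositionBlocks hS).mpr ⟨fun i hi => hlS i (List.mem_of_mem_eraseIdx hi), by omega⟩⟩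

theorem sum_getD_mul_compositionWeight_eq (hS : 0 ∉ S) (n : ℕ) :
    ∑ p ∈ (compositionBlocks S n).sigma fun l => range l.length,
        (p.1.getD p.2 0 : ℚ) * compositionWeight p.1 =
      ∑ p ∈ ((Icc 1 n).filter (· ∈ S)).sigma fun s =>
          (compositionBlocks S (n - s)).sigma fun m => range (m.length + 1),
        compositionWeight p.2.1 / (p.2.1.length + 1) := by
  symm
  refine sum_nbij' (fun p => ⟨p.2.1.insertIdx p.2.2 p.1, p.2.2⟩)
    (fun p => ⟨p.1.getD p.2 0, p.1.eraseIdx p.2, p.2⟩) ?_ ?_ ?_ ?_ ?_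
  · rintro ⟨s, m, j⟩ h
    simp only [mem_sigma, mem_filter, mem_Icc, mem_range] at h ⊢
    refine ⟨insertIdx_mem_compositionBlocks hS h.2.1 h.1.2 h.1.1.2 (by omega), ?_⟩
    rw [List.length_insertIdx_of_le_length (by omega)]
    exact h.2.2
  · rintro ⟨l, j⟩ h
    simp only [mem_sigma, mem_range] at h ⊢
    rw [List.getD_eq_getElem _ _ h.2, List.length_eraseIdx_of_lt h.2]
    exact ⟨(eraseIdx_mem_compositionBlocks hS h.1 h.2).1,
      (eraseIdx_mem_compositionBlocks hS h.1 h.2).2, by omega⟩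
  · rintro ⟨s, m, j⟩ h
    have hj : j ≤ m.length :=
      Nat.lt_succ_iff.mp (mem_range.mp (mem_sigma.mp (mem_sigma.mp h).2).2)
    simp [List.getD_eq_getElem?_getD, List.getElem?_insertIdx_self, hj]
  · rintro ⟨l, j⟩ h
    have hj : j < l.length := mem_range.mp (mem_sigma.mp h).2
    rw [List.getD_eq_getElem _ _ hj, List.insertIdx_eraseIdx_getElem hj]
  · rintro ⟨s, m, j⟩ h
    simp only [mem_sigma, mem_filter, mem_range] at h
    have hj : j ≤ m.length := by omega
    rw [List.getD_eq_getElem?_getD, List.getElem?_insertIdx_self, if_pos hj, Option.getD_some,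
      compositionWeight_insertIdx m hj (ne_of_mem_of_not_mem h.1.2 hS)]

theorem natCast_mul_sum_compositionBlocks (hS : 0 ∉ S) (n : ℕ) :
    (n : ℚ) * ∑ l ∈ compositionBlocks S n, compositionWeight l =
      ∑ s ∈ (Icc 1 n).filter (· ∈ S), ∑ l ∈ compositionBlocks S (n - s), compositionWeight l := by
  have hmarked (l : List ℕ) (hl : l ∈ compositionBlocks S n) :
      (n : ℚ) * compositionWeight l =
        ∑ j ∈ range l.length, (l.getD j 0 : ℚ) * compositionWeight l := by
    rw [← sum_mul, ← ((mem_compositionBlocks hS).mp hl).2, List.sum_eq_sum_range_getD]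
    push_cast
    rfl
  have hslots (m : List ℕ) :
      ∑ _j ∈ range (m.length + 1), compositionWeight m / (m.length + 1) = compositionWeight m := by
    rw [sum_const, card_range, nsmul_eq_mul]
    push_cast
    field_simp
  rw [mul_sum, sum_congr rfl hmarked, sum_sigma', sum_getD_mul_compositionWeight_eq hS, sum_sigma]
  refine sum_congr rfl fun s _ => ?_
  rw [sum_sigma]
  exact sum_congr rfl fun m _ => hslots m

end Compositions

theorem eq_of_natCast_mul_eq_sum {K : Type*} [Field K] [CharZero K] {p : ℕ → Prop}
    [DecidablePred p] {f g : ℕ → K} (h0 : f 0 = g 0)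
    (hf : ∀ n : ℕ, (n : K) * f n = ∑ s ∈ (Icc 1 n).filter p, f (n - s))
    (hg : ∀ n : ℕ, (n : K) * g n = ∑ s ∈ (Icc 1 n).filter p, g (n - s)) : f = g := by
  funext n
  induction n using Nat.strong_induction_on with
  | _ n ih =>
    rcases n.eq_zero_or_pos with rfl | hn
    · exact h0
    refine mul_left_cancel₀ (Nat.cast_ne_zero.mpr hn.ne') ?_
    rw [hf, hg]
    refine sum_congr rfl fun s hs => ih _ ?_
    have := mem_Icc.mp (mem_filter.mp hs).1
    omega

theorem statement6 (S : Set ℕ) [DecidablePred (· ∈ S)] (hS : 0 ∉ S) (n : ℕ) :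
    (genA S n : ℚ) / n.factorial =
      ∑ π ∈ Finset.univ.filter
          (fun π : Composition n => ∀ i ∈ π.blocks, i ∈ S),
        1 / ((π.length.factorial : ℚ) * (π.blocks.prod : ℚ)) := by
  rw [sum_compositions_eq_sum_compositionBlocks]
  have h0 : (genA S 0 : ℚ) / (0 : ℕ).factorial =
      ∑ l ∈ compositionBlocks S 0, compositionWeight l := by
    simp [genA_zero, compositionBlocks_zero hS, compositionWeight]
  exact congrFun (eq_of_natCast_mul_eq_sum h0 (natCast_mul_genA_div_factorial hS)
    (natCast_mul_sum_compositionBlocks hS)) n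
end

section
/- Let S be a set of positive integers and let σ be a positive integer with σ ∉ S. Then for all n ∈ ℕ, as rational numbers, B_{n, S ∪ {σ}} = ∑_{i=0}^{⌊n/σ⌋} n!/(i! · (n−σi)! · (σ!)^i) · B_{n−σi, S}. -/
/-!
Sorting the blocks of a partition with sizes in `S ∪ {σ}` by whether their size is `σ`
identifies such a partition with a set `A`, a partition of `A` into `σ`-blocks and a partition
of `Aᶜ` with block sizes in `S`. Hence `B_{n, S ∪ {σ}} = ∑ₖ C(n, k) B_{k, {σ}} B_{n - k, S}`.
A set of size `k` has a partition into `σ`-blocks only if `σ ∣ k`; removing the block through a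
fixed point shows that `B_{σ i, {σ}}` satisfies the recursion of
`Nat.uniformBell i σ = (σ i)! / (σ!^i i!)`.
-/

/-- Generalized Bell number `B_{n,S}`: the number of set partitions of `{1,…,n}`
all of whose block sizes lie in `S`. -/
noncomputable def genB (S : Set ℕ) (n : ℕ) : ℕ :=
  Nat.card {P : Finpartition (Finset.univ : Finset (Fin n)) // ∀ p ∈ P.parts, p.card ∈ S}

open Finset

namespace Finpartition

def disjSup {α : Type*} [DistribLattice α] [OrderBot α] [DecidableEq α] {a b : α}
    (P : Finpartition a) (Q : Finpartition b) (h : Disjoint a b) :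
    Finpartition (a ⊔ b) where
  parts := P.parts ∪ Q.parts
  supIndep := P.supIndep.union Q.supIndep (by rwa [P.sup_parts, Q.sup_parts])
  sup_parts := by rw [sup_union, P.sup_parts, Q.sup_parts]
  bot_notMem := by simp [P.bot_notMem, Q.bot_notMem]

theorem sup_filter_not {α : Type*} [GeneralizedBooleanAlgebra α] [DecidableEq α] {a : α}
    (P : Finpartition a) (p : α → Prop) [DecidablePred p] :
    (P.parts.filter (¬ p ·)).sup id = a \ (P.parts.filter p).sup id := by
  have hdisj : Disjoint ((P.parts.filter p).sup id) ((P.parts.filter (¬ p ·)).sup id) :=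
    P.supIndep.disjoint_sup_sup (filter_subset _ _) (filter_subset _ _)
      (disjoint_filter_filter_not _ _ _)
  have hcover : (P.parts.filter p).sup id ⊔ (P.parts.filter (¬ p ·)).sup id = a := by
    rw [← sup_union, filter_union_filter_not_eq, P.sup_parts]
  rw [← hdisj.sup_sdiff_cancel_left, hcover]

theorem mem_parts_of_part_eq {α : Type*} [DecidableEq α] {s b : Finset α} {a : α}
    (P : Finpartition s) (ha : a ∈ s) (h : P.part a = b) : b ∈ P.parts :=
  h ▸ P.part_mem.2 ha

end Finpartition

theorem sum_finset_eq_sum_range_choose {α M : Type*} [Fintype α] [AddCommMonoid M]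
    (f : ℕ → M) :
    ∑ A : Finset α, f #A =
      ∑ k ∈ range (Fintype.card α + 1), (Fintype.card α).choose k • f k := by
  rw [← powerset_univ, sum_powerset, card_univ]
  exact sum_congr rfl fun k _ => by rw [sum_powersetCard, card_univ]

theorem sum_range_succ_eq_sum_mul_of_not_dvd {M : Type*} [AddCommMonoid M] {d : ℕ} (hd : 0 < d)
    (n : ℕ) {f : ℕ → M} (hf : ∀ k, ¬ d ∣ k → f k = 0) :
    ∑ k ∈ range (n + 1), f k = ∑ i ∈ range (n / d + 1), f (d * i) := by
  have hmem (i : ℕ) : d * i ∈ range (n + 1) ↔ i ∈ range (n / d + 1) := by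
    simp only [mem_range, Nat.lt_succ_iff, Nat.le_div_iff_mul_le hd, mul_comm]
  rw [← sum_image fun i _ j _ h => Nat.eq_of_mul_eq_mul_left hd h]
  refine (sum_subset (fun k hk => ?_) fun k hk hk' => hf k ?_).symm
  · obtain ⟨i, hi, rfl⟩ := mem_image.1 hk
    exact (hmem i).2 hi
  · rintro ⟨i, rfl⟩
    exact hk' (mem_image_of_mem _ ((hmem i).1 hk))

open Nat in
theorem choose_mul_uniformBell_eq {K : Type*} [Field K] [CharZero K] {n σ i : ℕ} (hσ : σ ≠ 0)
    (h : σ * i ≤ n) :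
    (n.choose (σ * i) * uniformBell i σ : K) = n ! / (i ! * (n - σ * i)! * σ ! ^ i) := by
  have hf (k : ℕ) : (k ! : K) ≠ 0 := cast_ne_zero.2 (factorial_ne_zero k)
  have hU : (uniformBell i σ * σ ! ^ i * i ! : K) = (σ * i)! := by
    rw [mul_comm σ i]; exact_mod_cast uniformBell_mul_eq i hσ
  have hU0 : (uniformBell i σ : K) ≠ 0 := fun h0 =>
    hf (σ * i) (by rw [← hU, h0, zero_mul, zero_mul])
  rw [cast_choose K h, eq_div_iff (by simp [hf]), ← hU]
  field_simp [hf]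

variable {α β : Type*} [DecidableEq α] [DecidableEq β]

theorem Finset.map_sup_id (f : α ↪ β) (U : Finset (Finset α)) :
    (U.sup id).map f = U.sup (map f) := by
  induction U using Finset.induction_on <;> simp [*, map_union]

namespace Finpartition

def mapEmbedding (f : α ↪ β) {s : Finset α} (P : Finpartition s) : Finpartition (s.map f) where
  parts := P.parts.map (Finset.mapEmbedding f).toEmbedding
  supIndep := by
    rw [supIndep_iff_pairwiseDisjoint, coe_map]
    rintro _ ⟨p, hp, rfl⟩ _ ⟨q, hq, rfl⟩ hpq
    exact (disjoint_map f).2 (P.disjoint hp hq (ne_of_apply_ne _ hpq))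
  sup_parts := by
    conv_rhs => rw [← P.sup_parts]
    rw [sup_map, map_sup_id]
    rfl
  bot_notMem := by simp

theorem parts_mapEmbedding (f : α ↪ β) {s : Finset α} (P : Finpartition s) :
    (P.mapEmbedding f).parts = P.parts.map (Finset.mapEmbedding f).toEmbedding := rfl

theorem mapEmbedding_injective (f : α ↪ β) (s : Finset α) :
    Function.Injective (mapEmbedding f (s := s)) := fun _ _ h =>
  Finpartition.ext (map_injective _ (congrArg parts h))

theorem exists_mapEmbedding_eq (f : α ↪ β) {s : Finset α} (Q : Finpartition (s.map f)) :
    ∃ P : Finpartition s, P.mapEmbedding f = Q := by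
  have hQ : Q.parts ⊆ s.powerset.map (Finset.mapEmbedding f).toEmbedding := fun p hp => by
    obtain ⟨u, hu, rfl⟩ := subset_map_iff.1 (Q.le hp)
    exact mem_map_of_mem _ (mem_powerset.2 hu)
  obtain ⟨U, -, hU⟩ := subset_map_iff.1 hQ
  refine ⟨{ parts := U, supIndep := ?_, sup_parts := ?_, bot_notMem := ?_ }, ?_⟩
  · have := Q.supIndep
    rw [hU, supIndep_map, supIndep_iff_pairwiseDisjoint] at this
    rw [supIndep_iff_pairwiseDisjoint]
    exact fun p hp q hq hpq => (disjoint_map f).1 (this hp hq hpq)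
  · apply map_injective f
    rw [map_sup_id, ← Q.sup_parts, hU, sup_map]
    rfl
  · intro h
    exact Q.bot_notMem (hU ▸ mem_map_of_mem _ h)
  · exact Finpartition.ext hU.symm

noncomputable def mapEmbeddingEquiv (f : α ↪ β) (s : Finset α) :
    Finpartition s ≃ Finpartition (s.map f) :=
  Equiv.ofBijective _ ⟨mapEmbedding_injective f s, exists_mapEmbedding_eq f⟩

end Finpartition

abbrev SizedFinpartition (S : Set ℕ) (s : Finset α) : Type _ :=
  {P : Finpartition s // ∀ p ∈ P.parts, #p ∈ S}

theorem card_sizedFinpartition_map (S : Set ℕ) (f : α ↪ β) (s : Finset α) :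
    Nat.card (SizedFinpartition S (s.map f)) = Nat.card (SizedFinpartition S s) :=
  (Nat.card_congr ((Finpartition.mapEmbeddingEquiv f s).subtypeEquiv fun P => by
    change _ ↔ ∀ p ∈ (P.mapEmbedding f).parts, #p ∈ S
    simp [Finpartition.parts_mapEmbedding])).symm

theorem card_sizedFinpartition (S : Set ℕ) (s : Finset α) :
    Nat.card (SizedFinpartition S s) = genB S #s := by
  have hs : (univ : Finset (Fin #s)).map (s.equivFin.symm.toEmbedding.trans (.subtype _)) = s := by
    simp [← map_map, map_univ_equiv, univ_eq_attach, attach_map_val]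
  conv_lhs => rw [← hs]
  exact card_sizedFinpartition_map S _ univ

theorem SizedFinpartition.filter_parts_of_subset {S T : Set ℕ} [DecidablePred (· ∈ T)]
    (hST : S ⊆ T) {s : Finset α} (P : SizedFinpartition S s) :
    P.1.parts.filter (#· ∈ T) = P.1.parts :=
  filter_true_of_mem fun p hp => hST (P.2 p hp)

theorem SizedFinpartition.filter_parts_of_disjoint {S T : Set ℕ} [DecidablePred (· ∈ T)]
    (hST : Disjoint S T) {s : Finset α} (P : SizedFinpartition S s) :
    P.1.parts.filter (#· ∈ T) = ∅ :=
  filter_false_of_mem fun p hp => hST.notMem_of_mem_left (P.2 p hp)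

section Fintype

variable [Fintype α]

def SizedFinpartition.splitEquiv {S T : Set ℕ} [DecidablePred (· ∈ T)] (hST : Disjoint S T)
    (A : Finset α) :
    {P : SizedFinpartition (S ∪ T) (univ : Finset α) //
        (P.1.parts.filter (#· ∈ T)).sup id = A} ≃
      SizedFinpartition T A × SizedFinpartition S Aᶜ where
  toFun P :=
    (⟨P.1.1.ofSubset (filter_subset _ _) P.2, fun p hp => (mem_filter.1 hp).2⟩,
      ⟨P.1.1.ofSubset (filter_subset (¬ #· ∈ T) _)
        (by rw [Finpartition.sup_filter_not, P.2, ← compl_eq_univ_sdiff]),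
        fun p hp => (P.1.2 p (mem_filter.1 hp).1).resolve_right (mem_filter.1 hp).2⟩)
  invFun QR :=
    ⟨⟨(QR.1.1.disjSup QR.2.1 disjoint_compl_right).copy sup_compl_eq_top, fun p hp =>
        (mem_union.1 hp).elim (fun h => Or.inr (QR.1.2 p h)) (fun h => Or.inl (QR.2.2 p h))⟩,
      by
        change ((QR.1.1.parts ∪ QR.2.1.parts).filter (#· ∈ T)).sup id = A
        rw [filter_union, QR.1.filter_parts_of_subset subset_rfl,
          QR.2.filter_parts_of_disjoint hST, union_empty, QR.1.1.sup_parts]⟩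
  left_inv P := by
    apply Subtype.ext; apply Subtype.ext; apply Finpartition.ext
    exact filter_union_filter_not_eq _ _
  right_inv QR := by
    obtain ⟨Q, R⟩ := QR
    have hQ := Q.filter_parts_of_subset subset_rfl
    have hR := R.filter_parts_of_disjoint hST
    refine Prod.ext (Subtype.ext (Finpartition.ext ?_)) (Subtype.ext (Finpartition.ext ?_))
    · change (Q.1.parts ∪ R.1.parts).filter (#· ∈ T) = Q.1.parts
      rw [filter_union, hQ, hR, union_empty]
    · change (Q.1.parts ∪ R.1.parts).filter (¬ #· ∈ T) = R.1.parts
      rw [filter_union, filter_not, filter_not, hQ, hR, sdiff_self, bot_eq_empty, sdiff_empty,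
        empty_union]

theorem card_sizedFinpartition_union {S T : Set ℕ} (hST : Disjoint S T) :
    Nat.card (SizedFinpartition (S ∪ T) (univ : Finset α)) =
      ∑ A : Finset α, genB T #A * genB S #Aᶜ := by
  classical
  rw [Nat.card_congr (Equiv.sigmaFiberEquiv
    fun P : SizedFinpartition (S ∪ T) univ => (P.1.parts.filter (#· ∈ T)).sup id).symm,
    Nat.card_sigma]
  refine sum_congr rfl fun A _ => ?_
  rw [Nat.card_congr (SizedFinpartition.splitEquiv hST A), Nat.card_prod,
    card_sizedFinpartition, card_sizedFinpartition]

def SizedFinpartition.partEquiv {S : Set ℕ} {a : α} {b : Finset α} (hab : a ∈ b)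
    (hb : #b ∈ S) :
    {P : SizedFinpartition S (univ : Finset α) // P.1.part a = b} ≃
      SizedFinpartition S bᶜ where
  toFun P :=
    have hmem := P.1.1.mem_parts_of_part_eq (mem_univ a) P.2
    ⟨P.1.1.ofSubset (erase_subset b _) (by
        rw [← filter_ne', Finpartition.sup_filter_not, filter_eq', if_pos hmem, sup_singleton,
          id, compl_eq_univ_sdiff]),
      fun p hp => P.1.2 p (mem_of_mem_erase hp)⟩
  invFun Q :=
    ⟨⟨Q.1.extend (ne_empty_of_mem hab) disjoint_compl_left compl_sup_eq_top, fun p hp =>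
        (mem_insert.1 hp).elim (· ▸ hb) (Q.2 p)⟩,
      Finpartition.part_eq_of_mem _ (mem_insert_self _ _) hab⟩
  left_inv P := by
    have hmem := P.1.1.mem_parts_of_part_eq (mem_univ a) P.2
    apply Subtype.ext; apply Subtype.ext; apply Finpartition.ext
    exact insert_erase hmem
  right_inv Q := by
    have hb : b ∉ Q.1.parts := fun h => (mem_compl.1 (Q.1.le h hab)) hab
    apply Subtype.ext; apply Finpartition.ext
    exact erase_insert hb

theorem card_sizedFinpartition_eq_sum_part (S : Set ℕ) [DecidablePred (· ∈ S)] (a : α) :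
    Nat.card (SizedFinpartition S (univ : Finset α)) =
      ∑ b : Finset α with a ∈ b ∧ #b ∈ S, genB S #bᶜ := by
  rw [Nat.card_congr (Equiv.sigmaFiberEquiv
    fun P : SizedFinpartition S univ => P.1.part a).symm, Nat.card_sigma, sum_filter]
  refine sum_congr rfl fun b _ => ?_
  split_ifs with h
  · rw [Nat.card_congr (SizedFinpartition.partEquiv h.1 h.2), card_sizedFinpartition]
  · refine @Nat.card_of_isEmpty _ ⟨fun ⟨P, hP⟩ => h ?_⟩
    subst hP
    exact ⟨P.1.mem_part_self.2 (mem_univ a), P.2 _ (P.1.part_mem.2 (mem_univ a))⟩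

end Fintype

theorem genB_union {S T : Set ℕ} (hST : Disjoint S T) (n : ℕ) :
    genB (S ∪ T) n = ∑ k ∈ range (n + 1), n.choose k * (genB T k * genB S (n - k)) := by
  change Nat.card (SizedFinpartition _ univ) = _
  rw [card_sizedFinpartition_union hST]
  simp_rw [card_compl, Fintype.card_fin]
  rw [sum_finset_eq_sum_range_choose (fun k => genB T k * genB S (n - k)), Fintype.card_fin]
  rfl

theorem genB_zero (S : Set ℕ) : genB S 0 = 1 := by
  have hparts (P : Finpartition (univ : Finset (Fin 0))) : P.parts = ∅ :=
    Finpartition.parts_eq_empty_iff.2 (by simp)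
  refine Nat.card_eq_one_iff_unique.2 ⟨⟨fun P Q => ?_⟩, ⟨⟨⊥, by simp [hparts]⟩⟩⟩
  exact Subtype.ext (Finpartition.ext (by rw [hparts, hparts]))

theorem genB_singleton_eq_zero {σ m : ℕ} (h : ¬ σ ∣ m) : genB {σ} m = 0 := by
  refine @Nat.card_of_isEmpty _ ⟨fun P => h ?_⟩
  have hsum := P.1.sum_card_parts
  rw [sum_congr rfl P.2, sum_const, smul_eq_mul, card_univ, Fintype.card_fin] at hsum
  exact ⟨_, hsum.symm.trans (mul_comm _ _)⟩

theorem genB_singleton_succ {σ : ℕ} (hσ : 0 < σ) (m : ℕ) :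
    genB {σ} (m + 1) = m.choose (σ - 1) * genB {σ} (m + 1 - σ) := by
  have hcount :
      #{b : Finset (Fin (m + 1)) | 0 ∈ b ∧ #b ∈ ({σ} : Set ℕ)} = m.choose (σ - 1) := by
    have h := card_filter_powersetCard_subset {(0 : Fin (m + 1))} univ σ (subset_univ _)
      (by rwa [card_singleton])
    rw [card_singleton, card_univ, Fintype.card_fin, add_tsub_cancel_right] at h
    rw [← h]
    congr 1
    ext b
    simp [and_comm]
  change Nat.card (SizedFinpartition _ univ) = _
  rw [card_sizedFinpartition_eq_sum_part {σ} 0, sum_congr rfl fun b hb => ?_, sum_const, hcount,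
    smul_eq_mul]
  rw [card_compl, Fintype.card_fin, Set.mem_singleton_iff.1 (mem_filter.1 hb).2.2]

theorem genB_singleton_mul {σ : ℕ} (hσ : 0 < σ) (i : ℕ) :
    genB {σ} (σ * i) = Nat.uniformBell i σ := by
  induction i with
  | zero => rw [mul_zero, genB_zero, Nat.uniformBell_zero_left]
  | succ i ih =>
    have h : σ * (i + 1) = (i * σ + σ - 1) + 1 := by
      rw [Nat.sub_add_cancel (by omega), mul_comm]; ring
    rw [h, genB_singleton_succ hσ, ← h, mul_add_one, Nat.add_sub_cancel, ih,
      Nat.uniformBell_succ_left]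

theorem statement14_general (S : Set ℕ) (σ : ℕ) (hσpos : 0 < σ) (hσ : σ ∉ S)
    (n : ℕ) :
    (genB (S ∪ {σ}) n : ℚ) =
      ∑ i ∈ Finset.range (n / σ + 1),
        (n.factorial : ℚ) /
            ((i.factorial : ℚ) * ((n - σ * i).factorial : ℚ) * (σ.factorial : ℚ) ^ i) *
          (genB S (n - σ * i) : ℚ) := by
  rw [genB_union (Set.disjoint_singleton_right.2 hσ), sum_range_succ_eq_sum_mul_of_not_dvd hσpos n
    fun k hk => by rw [genB_singleton_eq_zero hk, zero_mul, mul_zero]]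
  push_cast
  refine sum_congr rfl fun i hi => ?_
  have hle : σ * i ≤ n := by
    rw [mul_comm, ← Nat.le_div_iff_mul_le hσpos]
    exact Nat.lt_succ_iff.1 (mem_range.1 hi)
  rw [genB_singleton_mul hσpos, ← mul_assoc, choose_mul_uniformBell_eq hσpos.ne' hle]

theorem statement14 (S : Set ℕ) (hS : 0 ∉ S) (σ : ℕ) (hσpos : 0 < σ) (hσ : σ ∉ S)
    (n : ℕ) :
    (genB (S ∪ {σ}) n : ℚ) =
      ∑ i ∈ Finset.range (n / σ + 1),
        (n.factorial : ℚ) /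
            ((i.factorial : ℚ) * ((n - σ * i).factorial : ℚ) * (σ.factorial : ℚ) ^ i) *
          (genB S (n - σ * i) : ℚ) :=
  statement14_general S σ hσpos hσ n
end
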